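/- arXiv:2012.09293 — 6 statements merged into one kernel-verified Lean document; each statement's English description precedes it below -/
import Mathlib

section
/- Let n ∈ ℕ and α, β, v̲, v̄, λ ∈ ℝⁿ with α ≤ β, v̲ ≤ v̄ and λ ≥ 0 (all inequalities elementwise). Let φ : ℝⁿ → ℝⁿ be a function such that for every v ∈ ℝⁿ with v̲ ≤ v ≤ v̄ and every index i, (φ(v)_i − α_i v_i)(β_i v_i − φ(v)_i) ≥ 0. Then for every v with v̲ ≤ v ≤ v̄ and w = φ(v), the quadratic form [v; w]ᵀ [[-2AB Λ, (A+B)Λ], [(A+B)Λ, -2Λ]] [v; w] is nonnegative, where A = diag(α), B = diag(β), Λ = diag(λ). -/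
open Matrix Finset

/-! Per coordinate the quadratic form is `2 λᵢ (wᵢ - αᵢ vᵢ)(βᵢ vᵢ - wᵢ)`, a nonnegative multiple
of the sector inequality. -/

theorem dotProduct_fromBlocks_diagonal_sector_mulVec {ι R : Type*} [Fintype ι] [DecidableEq ι]
    [CommRing R] (α β lam v w : ι → R) :
    Sum.elim v w ⬝ᵥ
        (Matrix.fromBlocks
          ((-2 : R) • (Matrix.diagonal α * Matrix.diagonal β * Matrix.diagonal lam))
          ((Matrix.diagonal α + Matrix.diagonal β) * Matrix.diagonal lam)
          ((Matrix.diagonal α + Matrix.diagonal β) * Matrix.diagonal lam)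
          ((-2 : R) • Matrix.diagonal lam)).mulVec (Sum.elim v w) =
      ∑ i, 2 * lam i * ((w i - α i * v i) * (β i * v i - w i)) := by
  simp only [Matrix.fromBlocks_mulVec, Matrix.diagonal_mul_diagonal, Matrix.add_mul,
    Matrix.smul_mulVec, Matrix.mulVec_diagonal, Matrix.add_mulVec, dotProduct,
    Fintype.sum_sum_type, Sum.elim_inl, Sum.elim_inr, Pi.add_apply, Pi.smul_apply,
    Sum.elim_comp_inl, Sum.elim_comp_inr, smul_eq_mul, ← Finset.sum_add_distrib]
  refine Finset.sum_congr rfl fun i _ => ?_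
  ring

theorem stmt_1_general (n : ℕ) (α β vlo vhi lam : Fin n → ℝ)
    (hlam : ∀ i, 0 ≤ lam i)
    (φ : (Fin n → ℝ) → (Fin n → ℝ))
    (hsec : ∀ v : Fin n → ℝ, (∀ i, vlo i ≤ v i ∧ v i ≤ vhi i) →
      ∀ i, (φ v i - α i * v i) * (β i * v i - φ v i) ≥ 0) :
    ∀ v : Fin n → ℝ, (∀ i, vlo i ≤ v i ∧ v i ≤ vhi i) →
      Sum.elim v (φ v) ⬝ᵥ
        (Matrix.fromBlocks
          ((-2 : ℝ) • (Matrix.diagonal α * Matrix.diagonal β * Matrix.diagonal lam))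
          ((Matrix.diagonal α + Matrix.diagonal β) * Matrix.diagonal lam)
          ((Matrix.diagonal α + Matrix.diagonal β) * Matrix.diagonal lam)
          ((-2 : ℝ) • Matrix.diagonal lam)).mulVec (Sum.elim v (φ v)) ≥ 0 := by
  intro v hv
  rw [dotProduct_fromBlocks_diagonal_sector_mulVec]
  exact Finset.sum_nonneg fun i _ =>
    mul_nonneg (mul_nonneg zero_le_two (hlam i)) (hsec v hv i)

/-- Local sector quadratic constraint for the combined nonlinearity
(Lemma 1 in the paper). -/
theorem stmt_1 (n : ℕ) (α β vlo vhi lam : Fin n → ℝ)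
    (hαβ : ∀ i, α i ≤ β i) (hv : ∀ i, vlo i ≤ vhi i) (hlam : ∀ i, 0 ≤ lam i)
    (φ : (Fin n → ℝ) → (Fin n → ℝ))
    (hsec : ∀ v : Fin n → ℝ, (∀ i, vlo i ≤ v i ∧ v i ≤ vhi i) →
      ∀ i, (φ v i - α i * v i) * (β i * v i - φ v i) ≥ 0) :
    ∀ v : Fin n → ℝ, (∀ i, vlo i ≤ v i ∧ v i ≤ vhi i) →
      Sum.elim v (φ v) ⬝ᵥ
        (Matrix.fromBlocks
          ((-2 : ℝ) • (Matrix.diagonal α * Matrix.diagonal β * Matrix.diagonal lam))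
          ((Matrix.diagonal α + Matrix.diagonal β) * Matrix.diagonal lam)
          ((Matrix.diagonal α + Matrix.diagonal β) * Matrix.diagonal lam)
          ((-2 : ℝ) • Matrix.diagonal lam)).mulVec (Sum.elim v (φ v)) ≥ 0 :=
  stmt_1_general n α β vlo vhi lam hlam φ hsec
end

section
/- Let ν̄ > 0 and set α := tanh(ν̄)/ν̄. Then for every ν ∈ [−ν̄, ν̄], (tanh(ν) − α·ν)·(ν − tanh(ν)) ≥ 0; that is, tanh restricted to [−ν̄, ν̄] satisfies the local sector [tanh(ν̄)/ν̄, 1]. -/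
/-!
Since `tanh' = 1 - tanh²` and `tanh` is increasing and nonnegative on `[0, ∞)`, the derivative of
`tanh` decreases there, so `tanh` is concave on `[0, ∞)`. As `tanh 0 = 0`, concavity puts `tanh`
above its chord `ν ↦ (tanh ν̄ / ν̄) ν` on `[0, ν̄]`, and `tanh' ≤ 1` puts it below the identity.
Both factors of the sector product are then nonnegative on `[0, ν̄]`, and the product is even
because `tanh` is odd.
-/

open Set

theorem ConcaveOn.div_mul_le_of_map_zero {𝕜 : Type*} [Field 𝕜] [LinearOrder 𝕜]
    [IsStrictOrderedRing 𝕜] {s : Set 𝕜} {f : 𝕜 → 𝕜} (hf : ConcaveOn 𝕜 s f) (h0 : 0 ∈ s)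
    (hf0 : f 0 = 0) {b x : 𝕜} (hb : b ∈ s) (hx0 : 0 ≤ x) (hxb : x ≤ b) :
    f b / b * x ≤ f x := by
  rcases hx0.eq_or_lt with rfl | hx
  · simp [hf0]
  have hb0 : 0 < b := hx.trans_le hxb
  have hconv := hf.2 h0 hb (div_nonneg (sub_nonneg.2 hxb) hb0.le) (div_nonneg hx0 hb0.le)
    (by field_simp; ring)
  simp only [zero_add, smul_eq_mul, hf0, mul_zero, div_mul_cancel₀ x hb0.ne'] at hconv
  linarith [div_mul_comm (f b) b x]

namespace Real

theorem hasDerivAt_tanh (x : ℝ) : HasDerivAt tanh (1 - tanh x ^ 2) x := by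
  have hsinhcosh : HasDerivAt (fun y => sinh y / cosh y) (1 - tanh x ^ 2) x := by
    refine ((hasDerivAt_sinh x).div (hasDerivAt_cosh x) (cosh_pos x).ne').congr_deriv ?_
    rw [tanh_eq_sinh_div_cosh]
    field_simp
  simpa only [← tanh_eq_sinh_div_cosh] using hsinhcosh

theorem deriv_tanh : deriv tanh = fun x => 1 - tanh x ^ 2 :=
  funext fun x => (hasDerivAt_tanh x).deriv

theorem differentiable_tanh : Differentiable ℝ tanh :=
  fun x => (hasDerivAt_tanh x).differentiableAt

theorem strictMono_tanh : StrictMono tanh :=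
  strictMono_of_deriv_pos fun x => by
    rw [deriv_tanh]
    exact sub_pos.2 (tanh_sq_lt_one x)

theorem tanh_nonneg {x : ℝ} (hx : 0 ≤ x) : 0 ≤ tanh x :=
  tanh_zero ▸ strictMono_tanh.monotone hx

theorem tanh_le_self {x : ℝ} (hx : 0 ≤ x) : tanh x ≤ x := by
  have hmono : Monotone fun y => y - tanh y := by
    refine monotone_of_deriv_nonneg (differentiable_id.sub differentiable_tanh) fun y => ?_
    have hderiv : HasDerivAt (fun y => y - tanh y) (1 - (1 - tanh y ^ 2)) y :=
      (hasDerivAt_id' y).sub (hasDerivAt_tanh y)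
    rw [hderiv.deriv]
    nlinarith [sq_nonneg (tanh y)]
  simpa using hmono hx

theorem concaveOn_tanh : ConcaveOn ℝ (Ici 0) tanh := by
  refine AntitoneOn.concaveOn_of_deriv (convex_Ici 0) differentiable_tanh.continuous.continuousOn
    differentiable_tanh.differentiableOn ?_
  rw [interior_Ici, deriv_tanh]
  intro x hx y _ hxy
  have := strictMono_tanh.monotone hxy
  nlinarith [tanh_nonneg (le_of_lt (mem_Ioi.1 hx))]

theorem tanh_sector_of_nonneg {b x : ℝ} (hx0 : 0 ≤ x) (hxb : x ≤ b) :
    (tanh x - tanh b / b * x) * (x - tanh x) ≥ 0 :=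
  mul_nonneg
    (sub_nonneg.2 (concaveOn_tanh.div_mul_le_of_map_zero self_mem_Ici tanh_zero
      (mem_Ici.2 (hx0.trans hxb)) hx0 hxb))
    (sub_nonneg.2 (tanh_le_self hx0))

end Real

theorem stmt_3_general (nubar : ℝ) :
    ∀ ν ∈ Set.Icc (-nubar) nubar,
      (Real.tanh ν - (Real.tanh nubar / nubar) * ν) * (ν - Real.tanh ν) ≥ 0 := by
  intro ν ⟨hlo, hhi⟩
  rcases le_total 0 ν with hν | hν
  · exact Real.tanh_sector_of_nonneg hν hhi
  · have hneg := Real.tanh_sector_of_nonneg (neg_nonneg.2 hν) (neg_le.1 hlo)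
    rw [Real.tanh_neg] at hneg
    linarith

/-- tanh restricted to [-nubar, nubar] satisfies the local sector [tanh(nubar)/nubar, 1]. -/
theorem stmt_3 (nubar : ℝ) (hnubar : 0 < nubar) :
    ∀ ν ∈ Set.Icc (-nubar) nubar,
      (Real.tanh ν - (Real.tanh nubar / nubar) * ν) * (ν - Real.tanh ν) ≥ 0 :=
  stmt_3_general nubar
end

section
/- Consider the plant x(k+1) = A_G x(k) + B_G u(k) with A_G ∈ ℝ^{n×n}, B_G ∈ ℝ^{n×m}, and the polytopic state constraint set X = {x ∈ ℝⁿ : |H_iᵀ x| ≤ h_i for i = 1,…,n_X} with h_i ≥ 0. Let the controller be given in LFT form by matrices N_ux ∈ ℝ^{m×n}, N_uw ∈ ℝ^{m×p}, N_vx ∈ ℝ^{p×n}, N_vw ∈ ℝ^{p×p}, a nonlinearity φ : ℝᵖ → ℝᵖ with φ(0) = 0, and a map w : ℝⁿ → ℝᵖ satisfying w(x) = φ(N_vx x + N_vw w(x)) for all x and w(0) = 0; the control is u(x) = N_ux x + N_uw w(x) and the closed-loop map is F(x) = A_G x + B_G u(x). Suppose there are vectors v̲ ≤ 0 ≤ v̄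 and α ≤ β in ℝᵖ such that: (a) for every x ∈ X, the vector v(x) := N_vx x + N_vw w(x) satisfies v̲ ≤ v(x) ≤ v̄; (b) for every v with v̲ ≤ v ≤ v̄ and every i, (φ(v)_i − α_i v_i)(β_i v_i − φ(v)_i) ≥ 0. Suppose further there exist a symmetric positive definite P ∈ ℝ^{n×n} and λ ∈ ℝᵖ with λ ≥ 0 such that, with A_φ = diag(α), B_φ = diag(β), Λ = diag(λ), R_V = [[I_n, 0], [N_ux, N_uw]], R_φ = [[N_vx, N_vw], [0, I_p]]: (c) R_Vᵀ [[A_GᵀPA_G − P, A_GᵀPB_G], [B_GᵀPA_G, B_GᵀPB_G]] R_V + R_φᵀ [[-2A_φB_φΛ, (A_φ+B_φ)Λ], [(A_φ+B_φ)Λ, -2Λ]] R_φ is negative definite; (d) for each i = 1,…,n_X, the block matrix [[h_i², H_iᵀ], [H_i, P]] is positive semidefinite. Then E(P) ⊆ X, and for every x₀ ∈ E(P) the trajectory x(0) = x₀, x(k+1) = F(x(k)) satisfies x(k) ∈ E(P) for all k ≥ 0 and x(k) → 0 as k → ∞. -/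
/-!
By the discriminant of the quadratic form of LMI (d), `(H_iᵀ x)² ≤ h_i² · xᵀPx`, so `E(P) ⊆ X`.
On `E(P)` the activation inputs therefore lie in the box where the sector condition holds, and
evaluating LMI (c) at `(x, w(x))` gives, for `V x = xᵀPx` and some `c > 0`,
`V (F x) - V x + ∑ 2λᵢ (wᵢ - αᵢvᵢ)(βᵢvᵢ - wᵢ) ≤ -c ‖x‖²` with a nonnegative sum (S-procedure).
Hence `V` decreases along trajectories in `E(P)`, which is thus invariant, and
`c ∑ ‖x(k)‖² ≤ V x₀`, which forces `x(k) → 0`.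
-/

open Matrix Filter

lemma dotProduct_transpose_mul_mul_mulVec {R k l o : Type*} [CommSemiring R]
    [Fintype k] [Fintype l] [Fintype o]
    (A : Matrix o k R) (Q : Matrix o o R) (B : Matrix o l R) (x : k → R) (y : l → R) :
    x ⬝ᵥ (Aᵀ * Q * B) *ᵥ y = (A *ᵥ x) ⬝ᵥ Q *ᵥ (B *ᵥ y) := by
  rw [← mulVec_mulVec, ← mulVec_mulVec, dotProduct_mulVec, vecMul_transpose]

lemma smul_dotProduct_mulVec_smul {R k : Type*} [CommSemiring R] [Fintype k]
    (M : Matrix k k R) (c : R) (z : k → R) :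
    (c • z) ⬝ᵥ M *ᵥ (c • z) = c ^ 2 * (z ⬝ᵥ M *ᵥ z) := by
  rw [mulVec_smul, dotProduct_smul, smul_dotProduct, smul_eq_mul, smul_eq_mul, sq, mul_assoc]

lemma continuous_dotProduct_mulVec_self {k : Type*} [Fintype k] (M : Matrix k k ℝ) :
    Continuous fun z : k → ℝ => z ⬝ᵥ M *ᵥ z :=
  continuous_id.dotProduct (continuous_const.matrix_mulVec continuous_id)

theorem exists_pos_dotProduct_mulVec_le_neg_mul_norm_sq {k : Type*} [Fintype k] {M : Matrix k k ℝ}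
    (hM : ∀ z ≠ 0, z ⬝ᵥ M *ᵥ z < 0) : ∃ c > 0, ∀ z, z ⬝ᵥ M *ᵥ z ≤ -c * ‖z‖ ^ 2 := by
  cases isEmpty_or_nonempty k
  · exact ⟨1, one_pos, fun z => by simp [Subsingleton.elim z 0]⟩
  obtain ⟨z₀, hz₀, hmax⟩ := (isCompact_sphere (0 : k → ℝ) 1).exists_isMaxOn
    (NormedSpace.sphere_nonempty.2 zero_le_one) (continuous_dotProduct_mulVec_self M).continuousOn
  refine ⟨-(z₀ ⬝ᵥ M *ᵥ z₀), neg_pos.2 (hM z₀ (ne_zero_of_mem_unit_sphere ⟨z₀, hz₀⟩)),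
    fun z => ?_⟩
  rcases eq_or_ne z 0 with rfl | hz
  · simp
  have hnorm : 0 < ‖z‖ := norm_pos_iff.2 hz
  have hmem : ‖z‖⁻¹ • z ∈ Metric.sphere (0 : k → ℝ) 1 := by
    simp [norm_smul, hnorm.ne']
  have hle : ‖z‖⁻¹ ^ 2 * (z ⬝ᵥ M *ᵥ z) ≤ z₀ ⬝ᵥ M *ᵥ z₀ := by
    have h : (‖z‖⁻¹ • z) ⬝ᵥ M *ᵥ (‖z‖⁻¹ • z) ≤ z₀ ⬝ᵥ M *ᵥ z₀ := hmax hmem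
    rwa [smul_dotProduct_mulVec_smul] at h
  rw [inv_pow, inv_mul_le_iff₀ (by positivity)] at hle
  linarith

theorem sq_dotProduct_le_of_posSemidef_fromBlocks {k : Type*} [Fintype k] {a : ℝ} {b : k → ℝ}
    {P : Matrix k k ℝ}
    (hd : (fromBlocks !![a] (of fun (_ : Fin 1) j => b j) (of fun j (_ : Fin 1) => b j) P).PosSemidef)
    (x : k → ℝ) : (b ⬝ᵥ x) ^ 2 ≤ a * (x ⬝ᵥ P *ᵥ x) := by
  have hq : ∀ s : ℝ, 0 ≤ a * (s * s) + 2 * (b ⬝ᵥ x) * s + x ⬝ᵥ P *ᵥ x := by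
    intro s
    have h0 := hd.dotProduct_mulVec_nonneg (Sum.elim (fun _ => s) x)
    have e1 : (fun _ => s) ⬝ᵥ !![a] *ᵥ (fun _ => s) = a * (s * s) := by
      simp [dotProduct, mulVec, mul_left_comm]
    have e2 : (fun _ => s) ⬝ᵥ (of fun (_ : Fin 1) j => b j) *ᵥ x = (b ⬝ᵥ x) * s := by
      simp [dotProduct, mulVec, Finset.mul_sum, mul_comm]
    have e3 : x ⬝ᵥ (of fun j (_ : Fin 1) => b j) *ᵥ (fun _ => s) = (b ⬝ᵥ x) * s := by
      simp only [dotProduct, mulVec, of_apply, Fin.sum_univ_one, Finset.sum_mul]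
      exact Finset.sum_congr rfl fun i _ => by ring
    rw [star_trivial, fromBlocks_mulVec, sumElim_dotProduct_sumElim] at h0
    simp only [Sum.elim_comp_inl, Sum.elim_comp_inr, dotProduct_add, e1, e2, e3] at h0
    linarith
  have hdisc := discrim_le_zero hq
  rw [discrim] at hdisc
  linarith

theorem abs_dotProduct_le_of_posSemidef_fromBlocks {k : Type*} [Fintype k] {c : ℝ} {b : k → ℝ}
    {P : Matrix k k ℝ} (hc : 0 ≤ c)
    (hd : (fromBlocks !![c ^ 2] (of fun (_ : Fin 1) j => b j) (of fun j (_ : Fin 1) => b j)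
      P).PosSemidef)
    {x : k → ℝ} (hx : x ⬝ᵥ P *ᵥ x ≤ 1) : |b ⬝ᵥ x| ≤ c :=
  abs_le_of_sq_le_sq ((sq_dotProduct_le_of_posSemidef_fromBlocks hd x).trans
    (mul_le_of_le_one_right (sq_nonneg c) hx)) hc

theorem norm_le_norm_sumElim {ι κ E : Type*} [Fintype ι] [Fintype κ] [SeminormedAddGroup E]
    (x : ι → E) (y : κ → E) : ‖x‖ ≤ ‖Sum.elim x y‖ :=
  (pi_norm_le_iff_of_nonneg (norm_nonneg _)).2 fun i => norm_le_pi_norm (Sum.elim x y) (Sum.inl i)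

section Lyapunov

variable {E : Type*} [SeminormedAddCommGroup E] {F : E → E} {V : E → ℝ} {r c : ℝ} {x₀ : E}

theorem iterate_le_of_decrease (hc : 0 ≤ c) (hdec : ∀ x, V x ≤ r → V (F x) + c * ‖x‖ ^ 2 ≤ V x)
    (hx₀ : V x₀ ≤ r) (k : ℕ) : V (F^[k] x₀) ≤ r := by
  induction k with
  | zero => exact hx₀
  | succ k ih =>
    rw [Function.iterate_succ_apply']
    linarith [hdec _ ih, mul_nonneg hc (sq_nonneg ‖F^[k] x₀‖)]

theorem iterate_add_sum_le_of_decrease (hc : 0 ≤ c)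
    (hdec : ∀ x, V x ≤ r → V (F x) + c * ‖x‖ ^ 2 ≤ V x) (hx₀ : V x₀ ≤ r) (k : ℕ) :
    V (F^[k] x₀) + c * ∑ i ∈ Finset.range k, ‖F^[i] x₀‖ ^ 2 ≤ V x₀ := by
  induction k with
  | zero => simp
  | succ k ih =>
    rw [Function.iterate_succ_apply', Finset.sum_range_succ]
    linarith [hdec _ (iterate_le_of_decrease hc hdec hx₀ k)]

/-- Telescoping the decrease against `V ≥ 0` makes `∑ ‖F^[k] x₀‖ ^ 2` summable. -/
theorem tendsto_iterate_zero_of_decrease (hV : ∀ x, 0 ≤ V x) (hc : 0 < c)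
    (hdec : ∀ x, V x ≤ r → V (F x) + c * ‖x‖ ^ 2 ≤ V x) (hx₀ : V x₀ ≤ r) :
    Tendsto (fun k => F^[k] x₀) atTop (nhds 0) := by
  have hsum : Summable fun k => ‖F^[k] x₀‖ ^ 2 := by
    refine summable_of_sum_range_le (c := V x₀ / c) (fun _ => sq_nonneg _) fun k => ?_
    rw [le_div_iff₀ hc]
    linarith [iterate_add_sum_le_of_decrease hc.le hdec hx₀ k, hV (F^[k] x₀)]
  have hsqrt := (Real.continuous_sqrt.tendsto 0).comp hsum.tendsto_atTop_zero
  simp only [Function.comp_def, Real.sqrt_sq (norm_nonneg _), Real.sqrt_zero] at hsqrt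
  exact tendsto_zero_iff_norm_tendsto_zero.2 hsqrt

end Lyapunov

section ClosedLoop

variable {ι κ μ : Type*} [Fintype ι] [Fintype κ]

def lyapunovBlock (A : Matrix ι ι ℝ) (B : Matrix ι μ ℝ) (P : Matrix ι ι ℝ) :
    Matrix (ι ⊕ μ) (ι ⊕ μ) ℝ :=
  fromBlocks (Aᵀ * P * A - P) (Aᵀ * P * B) (Bᵀ * P * A) (Bᵀ * P * B)

def sectorBlock [DecidableEq κ] (α β lam : κ → ℝ) : Matrix (κ ⊕ κ) (κ ⊕ κ) ℝ :=
  fromBlocks ((-2 : ℝ) • (diagonal α * diagonal β * diagonal lam))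
    ((diagonal α + diagonal β) * diagonal lam) ((diagonal α + diagonal β) * diagonal lam)
    ((-2 : ℝ) • diagonal lam)

theorem sumElim_dotProduct_lyapunovBlock_mulVec [Fintype μ] (A : Matrix ι ι ℝ) (B : Matrix ι μ ℝ)
    (P : Matrix ι ι ℝ) (x : ι → ℝ) (u : μ → ℝ) :
    Sum.elim x u ⬝ᵥ lyapunovBlock A B P *ᵥ Sum.elim x u =
      (A *ᵥ x + B *ᵥ u) ⬝ᵥ P *ᵥ (A *ᵥ x + B *ᵥ u) - x ⬝ᵥ P *ᵥ x := by
  simp only [lyapunovBlock, fromBlocks_mulVec, sumElim_dotProduct_sumElim, Sum.elim_comp_inl,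
    Sum.elim_comp_inr, sub_mulVec, dotProduct_add, dotProduct_sub,
    dotProduct_transpose_mul_mul_mulVec, mulVec_add, add_dotProduct]
  ring

theorem sumElim_dotProduct_sectorBlock_mulVec [DecidableEq κ] (α β lam v ω : κ → ℝ) :
    Sum.elim v ω ⬝ᵥ sectorBlock α β lam *ᵥ Sum.elim v ω =
      ∑ i, 2 * lam i * (ω i - α i * v i) * (β i * v i - ω i) := by
  rw [sectorBlock, fromBlocks_mulVec, sumElim_dotProduct_sumElim]
  simp only [Sum.elim_comp_inl, Sum.elim_comp_inr, diagonal_mul_diagonal, diagonal_add,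
    ← diagonal_smul, mulVec_diagonal, dotProduct, Pi.add_apply, Pi.smul_apply,
    smul_eq_mul, ← Finset.sum_add_distrib]
  exact Finset.sum_congr rfl fun i _ => by ring

theorem fromBlocks_one_zero_mulVec_sumElim [DecidableEq ι] (C : Matrix μ ι ℝ) (D : Matrix μ κ ℝ)
    (x : ι → ℝ) (y : κ → ℝ) :
    fromBlocks 1 0 C D *ᵥ Sum.elim x y = Sum.elim x (C *ᵥ x + D *ᵥ y) := by
  simp [fromBlocks_mulVec]

theorem fromBlocks_zero_one_mulVec_sumElim [DecidableEq κ] (A : Matrix μ ι ℝ) (B : Matrix μ κ ℝ)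
    (x : ι → ℝ) (y : κ → ℝ) :
    fromBlocks A B 0 1 *ᵥ Sum.elim x y = Sum.elim (A *ᵥ x + B *ᵥ y) y := by
  simp [fromBlocks_mulVec]

variable [DecidableEq ι] [DecidableEq κ] [Fintype μ]

/-- The matrix of LMI (c). The ascribed types keep `*` from elaborating through the
`CStarMatrix` default `HMul` instance. -/
def closedLoopLMIMatrix (A : Matrix ι ι ℝ) (B : Matrix ι μ ℝ) (P : Matrix ι ι ℝ)
    (Nux : Matrix μ ι ℝ) (Nuw : Matrix μ κ ℝ) (Nvx : Matrix κ ι ℝ) (Nvw : Matrix κ κ ℝ)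
    (α β lam : κ → ℝ) : Matrix (ι ⊕ κ) (ι ⊕ κ) ℝ :=
  (fromBlocks (1 : Matrix ι ι ℝ) 0 Nux Nuw)ᵀ * lyapunovBlock A B P *
      fromBlocks (1 : Matrix ι ι ℝ) 0 Nux Nuw +
    (fromBlocks Nvx Nvw (0 : Matrix κ ι ℝ) 1)ᵀ * sectorBlock α β lam *
      fromBlocks Nvx Nvw (0 : Matrix κ ι ℝ) 1

theorem sumElim_dotProduct_closedLoopLMIMatrix_mulVec (A : Matrix ι ι ℝ) (B : Matrix ι μ ℝ)
    (P : Matrix ι ι ℝ) (Nux : Matrix μ ι ℝ) (Nuw : Matrix μ κ ℝ) (Nvx : Matrix κ ι ℝ)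
    (Nvw : Matrix κ κ ℝ) (α β lam : κ → ℝ) (x : ι → ℝ) (ω : κ → ℝ) :
    Sum.elim x ω ⬝ᵥ closedLoopLMIMatrix A B P Nux Nuw Nvx Nvw α β lam *ᵥ Sum.elim x ω =
      (A *ᵥ x + B *ᵥ (Nux *ᵥ x + Nuw *ᵥ ω)) ⬝ᵥ P *ᵥ (A *ᵥ x + B *ᵥ (Nux *ᵥ x + Nuw *ᵥ ω)) -
        x ⬝ᵥ P *ᵥ x +
      ∑ i, 2 * lam i * (ω i - α i * (Nvx *ᵥ x + Nvw *ᵥ ω) i) *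
        (β i * (Nvx *ᵥ x + Nvw *ᵥ ω) i - ω i) := by
  rw [closedLoopLMIMatrix, add_mulVec, dotProduct_add, dotProduct_transpose_mul_mul_mulVec,
    dotProduct_transpose_mul_mul_mulVec, fromBlocks_one_zero_mulVec_sumElim,
    fromBlocks_zero_one_mulVec_sumElim, sumElim_dotProduct_lyapunovBlock_mulVec,
    sumElim_dotProduct_sectorBlock_mulVec]

end ClosedLoop

theorem stmt_8_general (n m p nX : ℕ)
    (A_G : Matrix (Fin n) (Fin n) ℝ) (B_G : Matrix (Fin n) (Fin m) ℝ)
    (H : Fin nX → Fin n → ℝ) (h : Fin nX → ℝ) (hh : ∀ i, 0 ≤ h i)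
    (Nux : Matrix (Fin m) (Fin n) ℝ) (Nuw : Matrix (Fin m) (Fin p) ℝ)
    (Nvx : Matrix (Fin p) (Fin n) ℝ) (Nvw : Matrix (Fin p) (Fin p) ℝ)
    (φ : (Fin p → ℝ) → (Fin p → ℝ))
    (w : (Fin n → ℝ) → (Fin p → ℝ))
    (hw : ∀ x, w x = φ (Nvx.mulVec x + Nvw.mulVec (w x)))
    (u : (Fin n → ℝ) → (Fin m → ℝ))
    (hu : ∀ x, u x = Nux.mulVec x + Nuw.mulVec (w x))
    (F : (Fin n → ℝ) → (Fin n → ℝ))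
    (hF : ∀ x, F x = A_G.mulVec x + B_G.mulVec (u x))
    (vlo vhi α β : Fin p → ℝ)
    -- (a) activation input bounds hold on the state constraint set X
    (ha : ∀ x : Fin n → ℝ, (∀ i, |H i ⬝ᵥ x| ≤ h i) →
      ∀ i, vlo i ≤ (Nvx.mulVec x + Nvw.mulVec (w x)) i ∧
           (Nvx.mulVec x + Nvw.mulVec (w x)) i ≤ vhi i)
    -- (b) local sector condition for the nonlinearity
    (hb : ∀ v : Fin p → ℝ, (∀ i, vlo i ≤ v i ∧ v i ≤ vhi i) →
      ∀ i, 0 ≤ (φ v i - α i * v i) * (β i * v i - φ v i))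
    (P : Matrix (Fin n) (Fin n) ℝ) (hP : P.PosDef)
    (lam : Fin p → ℝ) (hlam : ∀ i, 0 ≤ lam i)
    -- (c) the Lyapunov LMI is negative definite
    (hc : ∀ z : Fin n ⊕ Fin p → ℝ, z ≠ 0 →
      z ⬝ᵥ ((Matrix.fromBlocks 1 0 Nux Nuw : Matrix (Fin n ⊕ Fin m) (Fin n ⊕ Fin p) ℝ)ᵀ *
              (Matrix.fromBlocks (A_Gᵀ * P * A_G - P) (A_Gᵀ * P * B_G)
                (B_Gᵀ * P * A_G) (B_Gᵀ * P * B_G)) *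
              (Matrix.fromBlocks 1 0 Nux Nuw) +
            (Matrix.fromBlocks Nvx Nvw 0 1 : Matrix (Fin p ⊕ Fin p) (Fin n ⊕ Fin p) ℝ)ᵀ *
              (Matrix.fromBlocks
                ((-2 : ℝ) • (Matrix.diagonal α * Matrix.diagonal β * Matrix.diagonal lam))
                ((Matrix.diagonal α + Matrix.diagonal β) * Matrix.diagonal lam)
                ((Matrix.diagonal α + Matrix.diagonal β) * Matrix.diagonal lam)
                ((-2 : ℝ) • Matrix.diagonal lam)) *
              (Matrix.fromBlocks Nvx Nvw 0 1)).mulVec z < 0)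
    -- (d) the set-containment LMIs
    (hd : ∀ i, (Matrix.fromBlocks (!![(h i) ^ 2])
        (Matrix.of fun (_ : Fin 1) j => H i j)
        (Matrix.of fun j (_ : Fin 1) => H i j) P).PosSemidef) :
    -- conclusion: E(P) ⊆ X, invariance of E(P), and convergence to 0
    (∀ x : Fin n → ℝ, x ⬝ᵥ P.mulVec x ≤ 1 → ∀ i, |H i ⬝ᵥ x| ≤ h i) ∧
    ∀ x₀ : Fin n → ℝ, x₀ ⬝ᵥ P.mulVec x₀ ≤ 1 →
      (∀ k : ℕ, (F^[k] x₀) ⬝ᵥ P.mulVec (F^[k] x₀) ≤ 1) ∧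
      Tendsto (fun k : ℕ => F^[k] x₀) atTop (nhds 0) := by
  have hX : ∀ x : Fin n → ℝ, x ⬝ᵥ P.mulVec x ≤ 1 → ∀ i, |H i ⬝ᵥ x| ≤ h i := fun x hx i =>
    abs_dotProduct_le_of_posSemidef_fromBlocks (hh i) (hd i) hx
  have hM : ∀ z ≠ 0, z ⬝ᵥ closedLoopLMIMatrix A_G B_G P Nux Nuw Nvx Nvw α β lam *ᵥ z < 0 := hc
  obtain ⟨c, hc0, hcM⟩ := exists_pos_dotProduct_mulVec_le_neg_mul_norm_sq hM
  have hdec : ∀ x, x ⬝ᵥ P *ᵥ x ≤ 1 → F x ⬝ᵥ P *ᵥ F x + c * ‖x‖ ^ 2 ≤ x ⬝ᵥ P *ᵥ x := by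
    intro x hx
    have hsector : 0 ≤ ∑ i, 2 * lam i * (w x i - α i * (Nvx *ᵥ x + Nvw *ᵥ w x) i) *
        (β i * (Nvx *ᵥ x + Nvw *ᵥ w x) i - w x i) := by
      refine Finset.sum_nonneg fun i _ => ?_
      have hb' := hb _ (ha x (hX x hx)) i
      rw [← hw x] at hb'
      linarith [mul_nonneg (hlam i) hb']
    have hz := hcM (Sum.elim x (w x))
    rw [sumElim_dotProduct_closedLoopLMIMatrix_mulVec, ← hu, ← hF] at hz
    have hnorm : c * ‖x‖ ^ 2 ≤ c * ‖Sum.elim x (w x)‖ ^ 2 := by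
      gcongr; exact norm_le_norm_sumElim x (w x)
    linarith
  have hV : ∀ x, 0 ≤ x ⬝ᵥ P *ᵥ x := fun x => by
    simpa using hP.posSemidef.dotProduct_mulVec_nonneg x
  exact ⟨hX, fun x₀ hx₀ => ⟨iterate_le_of_decrease hc0.le hdec hx₀,
    tendsto_iterate_zero_of_decrease hV hc0 hdec hx₀⟩⟩

/-- Theorem 1 of the paper: the Lyapunov LMI together with the set-containment
LMIs certifies that E(P) ⊆ X is an invariant inner-approximation of the region
of attraction of the closed loop of an LTI plant with an NN controller. -/
theorem stmt_8 (n m p nX : ℕ)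
    (A_G : Matrix (Fin n) (Fin n) ℝ) (B_G : Matrix (Fin n) (Fin m) ℝ)
    (H : Fin nX → Fin n → ℝ) (h : Fin nX → ℝ) (hh : ∀ i, 0 ≤ h i)
    (Nux : Matrix (Fin m) (Fin n) ℝ) (Nuw : Matrix (Fin m) (Fin p) ℝ)
    (Nvx : Matrix (Fin p) (Fin n) ℝ) (Nvw : Matrix (Fin p) (Fin p) ℝ)
    (φ : (Fin p → ℝ) → (Fin p → ℝ)) (hφ0 : φ 0 = 0)
    (w : (Fin n → ℝ) → (Fin p → ℝ))
    (hw : ∀ x, w x = φ (Nvx.mulVec x + Nvw.mulVec (w x))) (hw0 : w 0 = 0)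
    (u : (Fin n → ℝ) → (Fin m → ℝ))
    (hu : ∀ x, u x = Nux.mulVec x + Nuw.mulVec (w x))
    (F : (Fin n → ℝ) → (Fin n → ℝ))
    (hF : ∀ x, F x = A_G.mulVec x + B_G.mulVec (u x))
    (vlo vhi α β : Fin p → ℝ)
    (hvlo : ∀ i, vlo i ≤ 0) (hvhi : ∀ i, 0 ≤ vhi i) (hαβ : ∀ i, α i ≤ β i)
    -- (a) activation input bounds hold on the state constraint set X
    (ha : ∀ x : Fin n → ℝ, (∀ i, |H i ⬝ᵥ x| ≤ h i) →
      ∀ i, vlo i ≤ (Nvx.mulVec x + Nvw.mulVec (w x)) i ∧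
           (Nvx.mulVec x + Nvw.mulVec (w x)) i ≤ vhi i)
    -- (b) local sector condition for the nonlinearity
    (hb : ∀ v : Fin p → ℝ, (∀ i, vlo i ≤ v i ∧ v i ≤ vhi i) →
      ∀ i, 0 ≤ (φ v i - α i * v i) * (β i * v i - φ v i))
    (P : Matrix (Fin n) (Fin n) ℝ) (hP : P.PosDef)
    (lam : Fin p → ℝ) (hlam : ∀ i, 0 ≤ lam i)
    -- (c) the Lyapunov LMI is negative definite
    (hc : ∀ z : Fin n ⊕ Fin p → ℝ, z ≠ 0 →
      z ⬝ᵥ ((Matrix.fromBlocks 1 0 Nux Nuw : Matrix (Fin n ⊕ Fin m) (Fin n ⊕ Fin p) ℝ)ᵀ *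
              (Matrix.fromBlocks (A_Gᵀ * P * A_G - P) (A_Gᵀ * P * B_G)
                (B_Gᵀ * P * A_G) (B_Gᵀ * P * B_G)) *
              (Matrix.fromBlocks 1 0 Nux Nuw) +
            (Matrix.fromBlocks Nvx Nvw 0 1 : Matrix (Fin p ⊕ Fin p) (Fin n ⊕ Fin p) ℝ)ᵀ *
              (Matrix.fromBlocks
                ((-2 : ℝ) • (Matrix.diagonal α * Matrix.diagonal β * Matrix.diagonal lam))
                ((Matrix.diagonal α + Matrix.diagonal β) * Matrix.diagonal lam)
                ((Matrix.diagonal α + Matrix.diagonal β) * Matrix.diagonal lam)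
                ((-2 : ℝ) • Matrix.diagonal lam)) *
              (Matrix.fromBlocks Nvx Nvw 0 1)).mulVec z < 0)
    -- (d) the set-containment LMIs
    (hd : ∀ i, (Matrix.fromBlocks (!![(h i) ^ 2])
        (Matrix.of fun (_ : Fin 1) j => H i j)
        (Matrix.of fun j (_ : Fin 1) => H i j) P).PosSemidef) :
    -- conclusion: E(P) ⊆ X, invariance of E(P), and convergence to 0
    (∀ x : Fin n → ℝ, x ⬝ᵥ P.mulVec x ≤ 1 → ∀ i, |H i ⬝ᵥ x| ≤ h i) ∧
    ∀ x₀ : Fin n → ℝ, x₀ ⬝ᵥ P.mulVec x₀ ≤ 1 →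
      (∀ k : ℕ, (F^[k] x₀) ⬝ᵥ P.mulVec (F^[k] x₀) ≤ 1) ∧
      Tendsto (fun k : ℕ => F^[k] x₀) atTop (nhds 0) :=
  stmt_8_general n m p nX A_G B_G H h hh Nux Nuw Nvx Nvw φ w hw u hu F hF vlo vhi α β ha hb P hP lam
    hlam hc hd
end

section
/- Let F : ℝⁿ → ℝⁿ, let P be an n×n real symmetric positive definite matrix, and let ε > 0. Define V(x) := xᵀPx. Suppose that for every x ∈ E(P), V(F(x)) − V(x) ≤ −ε‖x‖². Then for every x₀ ∈ E(P), the sequence defined by x(0) = x₀, x(k+1) = F(x(k)) satisfies x(k) ∈ E(P) for all k ≥ 0, the sum Σ_{k=0}^{∞} ‖x(k)‖² is finite, and x(k) → 0 as k → ∞. -/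
open Matrix Filter Topology

/-! Along a trajectory the Lyapunov function drops by at least `ε * W` at each step, so the
sublevel set is invariant and the partial sums of `ε * W` telescope to at most `V x₀`. With
`W x = x ⬝ᵥ x`, summability forces `x ⬝ᵥ x → 0`, hence `x → 0` coordinatewise. -/

theorem summable_of_succ_add_le {v w : ℕ → ℝ} (hv : ∀ k, 0 ≤ v k) (hw : ∀ k, 0 ≤ w k)
    (h : ∀ k, v (k + 1) + w k ≤ v k) : Summable w := by
  have partial_sum_le : ∀ m, ∑ k ∈ Finset.range m, w k + v m ≤ v 0 := by
    intro m
    induction m with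
    | zero => simp
    | succ m ih => rw [Finset.sum_range_succ]; linarith [h m]
  exact summable_of_sum_range_le hw fun m => by linarith [partial_sum_le m, hv m]

theorem tendsto_zero_of_dotProduct_self_tendsto_zero {ι κ : Type*} [Fintype ι] {l : Filter κ}
    {f : κ → ι → ℝ} (h : Tendsto (fun k => f k ⬝ᵥ f k) l (𝓝 0)) : Tendsto f l (𝓝 0) := by
  refine tendsto_pi_nhds.2 fun i => squeeze_zero_norm (fun k => ?_) (by simpa using h.sqrt)
  refine Real.abs_le_sqrt ?_
  simpa [dotProduct, sq] using
    Finset.single_le_sum (fun j _ => mul_self_nonneg (f k j)) (Finset.mem_univ i)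

section Lyapunov

variable {α : Type*} {F : α → α} {V W : α → ℝ} {c ε : ℝ}

theorem iterate_le_of_lyapunov (hdec : ∀ x, V x ≤ c → V (F x) - V x ≤ -ε * W x)
    (hε : 0 ≤ ε) (hW : ∀ x, 0 ≤ W x) {x₀ : α} (h₀ : V x₀ ≤ c) (k : ℕ) : V (F^[k] x₀) ≤ c := by
  refine Set.MapsTo.iterate (s := {x | V x ≤ c}) (fun x hx => ?_) k h₀
  have := hdec x hx
  have := mul_nonneg hε (hW x)
  simp only [Set.mem_ofPred_eq] at hx ⊢
  linarith

theorem summable_of_lyapunov (hdec : ∀ x, V x ≤ c → V (F x) - V x ≤ -ε * W x)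
    (hε : 0 < ε) (hV : ∀ x, 0 ≤ V x) (hW : ∀ x, 0 ≤ W x) {x₀ : α} (h₀ : V x₀ ≤ c) :
    Summable fun k => W (F^[k] x₀) := by
  refine (summable_mul_left_iff hε.ne').1 <|
    summable_of_succ_add_le (v := fun k => V (F^[k] x₀)) (fun k => hV _)
      (fun k => mul_nonneg hε.le (hW _)) fun k => ?_
  have := hdec _ (iterate_le_of_lyapunov hdec hε.le hW h₀ k)
  rw [Function.iterate_succ_apply']
  linarith

end Lyapunov

/-- Discrete-time Lyapunov argument with strict decrease: if V(F(x)) − V(x) ≤ −ε‖x‖²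
on the sublevel set E(P), then E(P) is invariant, the trajectory is square-summable,
and it converges to the origin. -/
theorem stmt_10 (n : ℕ) (F : (Fin n → ℝ) → (Fin n → ℝ))
    (P : Matrix (Fin n) (Fin n) ℝ) (hP : P.PosDef) (ε : ℝ) (hε : 0 < ε)
    (hV : ∀ x : Fin n → ℝ, x ⬝ᵥ P.mulVec x ≤ 1 →
      F x ⬝ᵥ P.mulVec (F x) - x ⬝ᵥ P.mulVec x ≤ -ε * (x ⬝ᵥ x)) :
    ∀ x₀ : Fin n → ℝ, x₀ ⬝ᵥ P.mulVec x₀ ≤ 1 →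
      (∀ k : ℕ, (F^[k] x₀) ⬝ᵥ P.mulVec (F^[k] x₀) ≤ 1) ∧
      Summable (fun k : ℕ => (F^[k] x₀) ⬝ᵥ (F^[k] x₀)) ∧
      Tendsto (fun k : ℕ => F^[k] x₀) atTop (nhds 0) := by
  intro x₀ h₀
  have hW (x : Fin n → ℝ) : 0 ≤ x ⬝ᵥ x := by simpa using dotProduct_star_self_nonneg x
  have hPnonneg (x : Fin n → ℝ) : 0 ≤ x ⬝ᵥ P *ᵥ x := by
    simpa using hP.posSemidef.dotProduct_mulVec_nonneg x
  have hsum := summable_of_lyapunov hV hε hPnonneg hW h₀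
  exact ⟨iterate_le_of_lyapunov hV hε.le hW h₀, hsum,
    tendsto_zero_of_dotProduct_self_tendsto_zero hsum.tendsto_atTop_zero⟩
end

section
/- Let N_ux ∈ ℝ^{m×n}, N_uw ∈ ℝ^{m×p}, N_vx ∈ ℝ^{p×n}, N_vw ∈ ℝ^{p×p}, and let A_φ, B_φ be p×p diagonal matrices. Define C₁ = N_uw(B_φ − A_φ)/2, C₂ = N_uw(A_φ + B_φ)/2, C₃ = N_vw(B_φ − A_φ)/2, C₄ = N_vw(A_φ + B_φ)/2, and assume I_p − C₄ is invertible. For any x ∈ ℝⁿ and z ∈ ℝᵖ, define v := (I_p − C₄)⁻¹ N_vx x + (I_p − C₄)⁻¹ C₃ z and w := ((B_φ − A_φ)/2) z + ((A_φ + B_φ)/2) v. Then (i) v = N_vx x + N_vw w, and (ii) N_ux x + N_uw w = (N_ux + C₂(I_p − C₄)⁻¹ N_vx) x + (C₁ + C₂(I_p − C₄)⁻¹ C₃) z. In particular, the loop-transformed representation with matrix Ñ := [[N_ux + C₂(I − C₄)⁻¹N_vx, C₁ + C₂(I − C₄)⁻¹C₃], [(I − C₄)⁻¹N_vx, (I −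 C₄)⁻¹C₃]] reproduces exactly the input–output equations u = N_ux x + N_uw w and v = N_vx x + N_vw w. -/
/-!
Substituting the definition of `w` gives `N_vw w = C₃ z + C₄ v` and `N_uw w = C₁ z + C₂ v`.
Then (i) is the defining equation `(I - C₄) v = N_vx x + C₃ z` read as a fixed point, and (ii)
follows by substituting the formula for `v` into `N_ux x + C₁ z + C₂ v`.
-/

open Matrix

theorem Matrix.mulVec_add_mulVec_mul {l n o R : Type*} [Fintype n] [Fintype o] [CommRing R]
    (N : Matrix l n R) (S : Matrix n o R) (T : Matrix n o R) (z v : o → R) :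
    N *ᵥ (S *ᵥ z + T *ᵥ v) = (N * S) *ᵥ z + (N * T) *ᵥ v := by
  rw [mulVec_add, mulVec_mulVec, mulVec_mulVec]

theorem Matrix.eq_add_mulVec_of_eq_nonsing_inv_one_sub_mulVec {n R : Type*} [Fintype n]
    [DecidableEq n] [CommRing R] {C : Matrix n n R} (hC : IsUnit (1 - C).det) {v y : n → R}
    (hv : v = (1 - C)⁻¹ *ᵥ y) : v = y + C *ᵥ v := by
  have hfix : (1 - C) *ᵥ v = y := by
    rw [hv, mulVec_mulVec, mul_nonsing_inv _ hC, one_mulVec]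
  rw [sub_mulVec, one_mulVec] at hfix
  rw [← hfix, sub_add_cancel]

theorem stmt_12_general (n m p : ℕ)
    (Nux : Matrix (Fin m) (Fin n) ℝ) (Nuw : Matrix (Fin m) (Fin p) ℝ)
    (Nvx : Matrix (Fin p) (Fin n) ℝ) (Nvw : Matrix (Fin p) (Fin p) ℝ)
    (Aφ Bφ : Matrix (Fin p) (Fin p) ℝ)
    (C₁ C₂ : Matrix (Fin m) (Fin p) ℝ) (C₃ C₄ : Matrix (Fin p) (Fin p) ℝ)
    (hC1 : C₁ = Nuw * ((1 / 2 : ℝ) • (Bφ - Aφ)))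
    (hC2 : C₂ = Nuw * ((1 / 2 : ℝ) • (Aφ + Bφ)))
    (hC3 : C₃ = Nvw * ((1 / 2 : ℝ) • (Bφ - Aφ)))
    (hC4 : C₄ = Nvw * ((1 / 2 : ℝ) • (Aφ + Bφ)))
    (hinv : IsUnit (1 - C₄).det)
    (x : Fin n → ℝ) (z : Fin p → ℝ)
    (v w : Fin p → ℝ)
    (hv : v = (1 - C₄)⁻¹.mulVec (Nvx.mulVec x) + (1 - C₄)⁻¹.mulVec (C₃.mulVec z))
    (hw : w = ((1 / 2 : ℝ) • (Bφ - Aφ)).mulVec z + ((1 / 2 : ℝ) • (Aφ + Bφ)).mulVec v) :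
    v = Nvx.mulVec x + Nvw.mulVec w ∧
    Nux.mulVec x + Nuw.mulVec w =
      (Nux + C₂ * (1 - C₄)⁻¹ * Nvx).mulVec x +
      (C₁ + C₂ * (1 - C₄)⁻¹ * C₃).mulVec z := by
  have hNvw : Nvw *ᵥ w = C₃ *ᵥ z + C₄ *ᵥ v := by
    rw [hw, mulVec_add_mulVec_mul, hC3, hC4]
  have hNuw : Nuw *ᵥ w = C₁ *ᵥ z + C₂ *ᵥ v := by
    rw [hw, mulVec_add_mulVec_mul, hC1, hC2]
  constructor
  · rw [hNvw, ← add_assoc]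
    exact eq_add_mulVec_of_eq_nonsing_inv_one_sub_mulVec hinv (by rw [hv, mulVec_add])
  · rw [hNuw, hv]
    simp only [add_mulVec, mulVec_add, Matrix.mul_assoc, ← mulVec_mulVec]
    abel

/-- The loop-transformed LFT representation Ñ reproduces exactly the input–output
equations of the original NN representation N. -/
theorem stmt_12 (n m p : ℕ)
    (Nux : Matrix (Fin m) (Fin n) ℝ) (Nuw : Matrix (Fin m) (Fin p) ℝ)
    (Nvx : Matrix (Fin p) (Fin n) ℝ) (Nvw : Matrix (Fin p) (Fin p) ℝ)
    (Aφ Bφ : Matrix (Fin p) (Fin p) ℝ) (hA : Aφ.IsDiag) (hB : Bφ.IsDiag)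
    (C₁ C₂ : Matrix (Fin m) (Fin p) ℝ) (C₃ C₄ : Matrix (Fin p) (Fin p) ℝ)
    (hC1 : C₁ = Nuw * ((1 / 2 : ℝ) • (Bφ - Aφ)))
    (hC2 : C₂ = Nuw * ((1 / 2 : ℝ) • (Aφ + Bφ)))
    (hC3 : C₃ = Nvw * ((1 / 2 : ℝ) • (Bφ - Aφ)))
    (hC4 : C₄ = Nvw * ((1 / 2 : ℝ) • (Aφ + Bφ)))
    (hinv : IsUnit (1 - C₄).det)
    (x : Fin n → ℝ) (z : Fin p → ℝ)
    (v w : Fin p → ℝ)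
    (hv : v = (1 - C₄)⁻¹.mulVec (Nvx.mulVec x) + (1 - C₄)⁻¹.mulVec (C₃.mulVec z))
    (hw : w = ((1 / 2 : ℝ) • (Bφ - Aφ)).mulVec z + ((1 / 2 : ℝ) • (Aφ + Bφ)).mulVec v) :
    v = Nvx.mulVec x + Nvw.mulVec w ∧
    Nux.mulVec x + Nuw.mulVec w =
      (Nux + C₂ * (1 - C₄)⁻¹ * Nvx).mulVec x +
      (C₁ + C₂ * (1 - C₄)⁻¹ * C₃).mulVec z :=
  stmt_12_general n m p Nux Nuw Nvx Nvw Aφ Bφ C₁ C₂ C₃ C₄ hC1 hC2 hC3 hC4 hinv x z v w hv hw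
end

section
/- Let A_G ∈ ℝ^{n×n}, B_G ∈ ℝ^{n×m}. Let Q₁ ∈ ℝ^{n×n} be symmetric positive definite, Q₂ ∈ ℝ^{p×p} diagonal positive definite, and L₁ ∈ ℝ^{m×n}, L₂ ∈ ℝ^{m×p}, L₃ ∈ ℝ^{p×n}, L₄ ∈ ℝ^{p×p}. Define P := Q₁⁻¹, Λ := Q₂⁻¹, Ñ_ux := L₁Q₁⁻¹, Ñ_uz := L₂Q₂⁻¹, Ñ_vx := L₃Q₁⁻¹, Ñ_vz := L₄Q₂⁻¹, and R_V := [[I_n, 0], [Ñ_ux, Ñ_uz]], R_φ := [[Ñ_vx, Ñ_vz], [0, I_p]]. Then the block matrix [[Q₁, 0, Q₁A_Gᵀ + L₁ᵀB_Gᵀ, L₃ᵀ], [0, Q₂, L₂ᵀB_Gᵀ, L₄ᵀ], [A_GQ₁ + B_GL₁, B_GL₂, Q₁, 0], [L₃, L₄, 0, Q₂]] is positive definite if and only if R_Vᵀ [[A_GᵀPA_G − P, A_GᵀPB_G], [B_GᵀPA_G, B_GᵀPB_G]] R_V + R_φᵀ · diag(Λ, −Λ) · R_φ is negative definite. -/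
/-!
Write `Q = diag(Q₁, Q₂)` and `V = [[A_G Q₁ + B_G L₁, B_G L₂], [L₃, L₄]]`; the LMI matrix is
`[[Q, Vᵀ], [V, Q]]`, so by the Schur complement it is positive definite iff `Q - Vᵀ Q⁻¹ V` is.
Congruence by `Q⁻¹` turns this into `Kᵀ Q⁻¹ K - Q⁻¹ < 0` for the closed-loop matrix `K = V Q⁻¹`,
whose blocks are `A_G + B_G Ñ_ux`, `B_G Ñ_uz`, `Ñ_vx`, `Ñ_vz`; expanding `Kᵀ Q⁻¹ K - Q⁻¹` along
the block rows of `K` gives the loop-transformed Lyapunov inequality.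
-/

open Matrix

namespace Matrix

variable {m n p : Type*} [Fintype m] [Fintype n] [Fintype p]

theorem posDef_fromBlocks₂₂_iff {R : Type*} [CommRing R] [PartialOrder R] [StarRing R]
    [StarOrderedRing R] [DecidableEq n] (A : Matrix m m R) (B : Matrix m n R)
    {D : Matrix n n R} (hD : D.PosDef) [Invertible D] :
    (fromBlocks A B Bᴴ D).PosDef ↔ (A - B * D⁻¹ * Bᴴ).PosDef := by
  have hquad (x : m → R) (y : n → R) := schur_complement_eq₂₂ A B x y hD.isHermitian
  simp only [← dotProduct_mulVec] at hquad
  rw [posDef_iff_dotProduct_mulVec, posDef_iff_dotProduct_mulVec,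
    IsHermitian.fromBlocks₂₂ _ _ hD.isHermitian]
  refine and_congr_right fun _ => ⟨fun h x hx => ?_, fun h z hz => ?_⟩
  · have hxy : x ⊕ᵥ -((D⁻¹ * Bᴴ) *ᵥ x) ≠ 0 := fun h0 =>
      hx (by simpa using congr_arg (· ∘ Sum.inl) h0)
    simpa [hquad] using h hxy
  · rw [← Sum.elim_comp_inl_inr z, hquad]
    obtain hx | hx := eq_or_ne (z ∘ Sum.inl) 0
    · have hy : z ∘ Sum.inr ≠ 0 := fun hy => hz (by
        rw [← Sum.elim_comp_inl_inr z, hx, hy, Sum.elim_zero_zero])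
      simpa [hx] using hD.dotProduct_mulVec_pos hy
    · exact add_pos_of_nonneg_of_pos (hD.posSemidef.dotProduct_mulVec_nonneg _) (h hx)

theorem PosDef.fromBlocks_zero {K : Type*} [Field K] [PartialOrder K] [StarRing K]
    [StarOrderedRing K] [DecidableEq n] {A : Matrix m m K} {D : Matrix n n K}
    (hA : A.PosDef) (hD : D.PosDef) : (fromBlocks A 0 0 D).PosDef := by
  have := hD.isUnit.invertible
  simpa using (posDef_fromBlocks₂₂_iff A 0 hD).2 (by simpa using hA)

section TrivialStar

variable {R : Type*} [CommRing R] [PartialOrder R] [StarRing R] [TrivialStar R]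

theorem posDef_iff_forall_dotProduct_mulVec_pos {M : Matrix n n R} (hM : M.IsSymm) :
    M.PosDef ↔ ∀ x ≠ 0, 0 < x ⬝ᵥ M *ᵥ x := by
  simp [posDef_iff_dotProduct_mulVec, hM]

theorem posDef_neg_iff_forall_dotProduct_mulVec_neg [IsOrderedAddMonoid R] {M : Matrix n n R}
    (hM : M.IsSymm) :
    (-M).PosDef ↔ ∀ x ≠ 0, x ⬝ᵥ M *ᵥ x < 0 := by
  simp only [posDef_iff_forall_dotProduct_mulVec_pos hM.neg, neg_mulVec, dotProduct_neg,
    Left.neg_pos_iff]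

theorem posDef_sub_transpose_mul_inv_mul_iff {K : Type*} [Field K] [PartialOrder K]
    [StarRing K] [TrivialStar K] [IsOrderedAddMonoid K] [DecidableEq n] {Q : Matrix n n K}
    (hQ : Q.PosDef) (V : Matrix n n K) :
    (Q - Vᵀ * Q⁻¹ * V).PosDef ↔
      ∀ z ≠ 0, z ⬝ᵥ ((V * Q⁻¹)ᵀ * Q⁻¹ * (V * Q⁻¹) - Q⁻¹) *ᵥ z < 0 := by
  have := hQ.isUnit.invertible
  have hP : Q⁻¹ᵀ = Q⁻¹ := by
    simpa [conjTranspose_eq_transpose_of_trivial] using hQ.inv.isHermitian.eq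
  have hsymm : ((V * Q⁻¹)ᵀ * Q⁻¹ * (V * Q⁻¹) - Q⁻¹).IsSymm := by
    simpa [conjTranspose_eq_transpose_of_trivial] using
      (isHermitian_conjTranspose_mul_mul (V * Q⁻¹) hQ.inv.isHermitian).sub hQ.inv.isHermitian
  have hcongr :
      (V * Q⁻¹)ᵀ * Q⁻¹ * (V * Q⁻¹) - Q⁻¹ = -(star Q⁻¹ * (Q - Vᵀ * Q⁻¹ * V) * Q⁻¹) := by
    rw [star_eq_conjTranspose, conjTranspose_eq_transpose_of_trivial, hP, transpose_mul, hP]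
    simp [Matrix.mul_sub, Matrix.sub_mul, Matrix.mul_assoc]
  rw [← posDef_neg_iff_forall_dotProduct_mulVec_neg hsymm, hcongr, neg_neg,
    IsUnit.posDef_star_left_conjugate_iff (isUnit_nonsing_inv_iff.2 hQ.isUnit)]

end TrivialStar

/-- `[A B] R_V` and `[1 0] R_φ` are the two block rows of the closed-loop matrix on the right,
and `R_Vᵀ diag(P, 0) R_V + R_φᵀ diag(0, Λ) R_φ = diag(P, Λ)`. -/
theorem fromBlocks_lyapunov_loopTransform {R : Type*} [CommRing R] [DecidableEq n]
    [DecidableEq p]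
    (A : Matrix n n R) (B : Matrix n m R) (P : Matrix n n R) (Λ : Matrix p p R)
    (Nux : Matrix m n R) (Nuz : Matrix m p R) (Nvx : Matrix p n R) (Nvz : Matrix p p R) :
    (fromBlocks (1 : Matrix n n R) 0 Nux Nuz)ᵀ *
        fromBlocks (Aᵀ * P * A - P) (Aᵀ * P * B) (Bᵀ * P * A) (Bᵀ * P * B) *
        fromBlocks (1 : Matrix n n R) 0 Nux Nuz +
      (fromBlocks Nvx Nvz 0 (1 : Matrix p p R))ᵀ * fromBlocks Λ 0 0 (-Λ) *
        fromBlocks Nvx Nvz 0 (1 : Matrix p p R) =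
    (fromBlocks (A + B * Nux) (B * Nuz) Nvx Nvz)ᵀ * fromBlocks P 0 0 Λ *
        fromBlocks (A + B * Nux) (B * Nuz) Nvx Nvz - fromBlocks P 0 0 Λ := by
  simp only [fromBlocks_transpose, fromBlocks_multiply, sub_eq_add_neg, fromBlocks_neg,
    fromBlocks_add, transpose_add, transpose_mul, transpose_one, transpose_zero, Matrix.mul_add,
    Matrix.add_mul, Matrix.mul_neg, Matrix.mul_zero, Matrix.zero_mul,
    Matrix.mul_one, Matrix.one_mul, Matrix.mul_assoc, add_zero, zero_add, neg_zero]
  congr 1 <;> abel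

end Matrix

theorem stmt_14_general (n m p : ℕ)
    (A_G : Matrix (Fin n) (Fin n) ℝ) (B_G : Matrix (Fin n) (Fin m) ℝ)
    (Q₁ : Matrix (Fin n) (Fin n) ℝ) (hQ₁ : Q₁.PosDef)
    (Q₂ : Matrix (Fin p) (Fin p) ℝ) (hQ₂ : Q₂.PosDef)
    (L₁ : Matrix (Fin m) (Fin n) ℝ) (L₂ : Matrix (Fin m) (Fin p) ℝ)
    (L₃ : Matrix (Fin p) (Fin n) ℝ) (L₄ : Matrix (Fin p) (Fin p) ℝ) :
    (∀ z : (Fin n ⊕ Fin p) ⊕ (Fin n ⊕ Fin p) → ℝ, z ≠ 0 →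
      0 < z ⬝ᵥ (Matrix.fromBlocks
            (Matrix.fromBlocks Q₁ 0 0 Q₂)
            (Matrix.fromBlocks (Q₁ * A_Gᵀ + L₁ᵀ * B_Gᵀ) L₃ᵀ (L₂ᵀ * B_Gᵀ) L₄ᵀ)
            (Matrix.fromBlocks (A_G * Q₁ + B_G * L₁) (B_G * L₂) L₃ L₄)
            (Matrix.fromBlocks Q₁ 0 0 Q₂)).mulVec z) ↔
    (∀ z : Fin n ⊕ Fin p → ℝ, z ≠ 0 →
      z ⬝ᵥ ((Matrix.fromBlocks (1 : Matrix (Fin n) (Fin n) ℝ) 0 (L₁ * Q₁⁻¹) (L₂ * Q₂⁻¹))ᵀ *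
              (Matrix.fromBlocks (A_Gᵀ * Q₁⁻¹ * A_G - Q₁⁻¹) (A_Gᵀ * Q₁⁻¹ * B_G)
                (B_Gᵀ * Q₁⁻¹ * A_G) (B_Gᵀ * Q₁⁻¹ * B_G)) *
              (Matrix.fromBlocks (1 : Matrix (Fin n) (Fin n) ℝ) 0 (L₁ * Q₁⁻¹) (L₂ * Q₂⁻¹)) +
            (Matrix.fromBlocks (L₃ * Q₁⁻¹) (L₄ * Q₂⁻¹) 0 (1 : Matrix (Fin p) (Fin p) ℝ))ᵀ *
              (Matrix.fromBlocks Q₂⁻¹ 0 0 (-Q₂⁻¹)) *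
              (Matrix.fromBlocks (L₃ * Q₁⁻¹) (L₄ * Q₂⁻¹) 0 (1 : Matrix (Fin p) (Fin p) ℝ))).mulVec z < 0) := by
  have := hQ₁.isUnit.invertible
  have := hQ₂.isUnit.invertible
  set Q := fromBlocks Q₁ 0 0 Q₂
  have hQ : Q.PosDef := hQ₁.fromBlocks_zero hQ₂
  have := hQ.isUnit.invertible
  have hQinv : Q⁻¹ = fromBlocks Q₁⁻¹ 0 0 Q₂⁻¹ := by
    simpa using inv_fromBlocks_zero₂₁_of_isUnit_iff Q₁ 0 Q₂ (iff_of_true hQ₁.isUnit hQ₂.isUnit)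
  set V := fromBlocks (A_G * Q₁ + B_G * L₁) (B_G * L₂) L₃ L₄
  have hVt : fromBlocks (Q₁ * A_Gᵀ + L₁ᵀ * B_Gᵀ) L₃ᵀ (L₂ᵀ * B_Gᵀ) L₄ᵀ = Vᵀ := by
    simp [V, fromBlocks_transpose, (isHermitian_iff_isSymm.1 hQ₁.isHermitian).eq]
  have hK : V * Q⁻¹ =
      fromBlocks (A_G + B_G * (L₁ * Q₁⁻¹)) (B_G * (L₂ * Q₂⁻¹)) (L₃ * Q₁⁻¹) (L₄ * Q₂⁻¹) := by
    simp [V, hQinv, fromBlocks_multiply, Matrix.add_mul, Matrix.mul_assoc]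
  have hQsymm : Q.IsSymm := by simpa using hQ.isHermitian
  rw [fromBlocks_lyapunov_loopTransform, ← hQinv, ← hK, ← posDef_sub_transpose_mul_inv_mul_iff hQ,
    hVt, ← posDef_iff_forall_dotProduct_mulVec_pos
      (hQsymm.fromBlocks (transpose_transpose V) hQsymm)]
  simpa using posDef_fromBlocks₂₂_iff Q Vᵀ hQ

/-- Convexification: the LMI in the variables (Q₁, Q₂, L₁, …, L₄) is positive
definite iff the loop-transformed Lyapunov matrix inequality is negative definite. -/
theorem stmt_14 (n m p : ℕ)
    (A_G : Matrix (Fin n) (Fin n) ℝ) (B_G : Matrix (Fin n) (Fin m) ℝ)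
    (Q₁ : Matrix (Fin n) (Fin n) ℝ) (hQ₁ : Q₁.PosDef)
    (Q₂ : Matrix (Fin p) (Fin p) ℝ) (hQ₂ : Q₂.PosDef) (hQ₂d : Q₂.IsDiag)
    (L₁ : Matrix (Fin m) (Fin n) ℝ) (L₂ : Matrix (Fin m) (Fin p) ℝ)
    (L₃ : Matrix (Fin p) (Fin n) ℝ) (L₄ : Matrix (Fin p) (Fin p) ℝ) :
    (∀ z : (Fin n ⊕ Fin p) ⊕ (Fin n ⊕ Fin p) → ℝ, z ≠ 0 →
      0 < z ⬝ᵥ (Matrix.fromBlocks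
            (Matrix.fromBlocks Q₁ 0 0 Q₂)
            (Matrix.fromBlocks (Q₁ * A_Gᵀ + L₁ᵀ * B_Gᵀ) L₃ᵀ (L₂ᵀ * B_Gᵀ) L₄ᵀ)
            (Matrix.fromBlocks (A_G * Q₁ + B_G * L₁) (B_G * L₂) L₃ L₄)
            (Matrix.fromBlocks Q₁ 0 0 Q₂)).mulVec z) ↔
    (∀ z : Fin n ⊕ Fin p → ℝ, z ≠ 0 →
      z ⬝ᵥ ((Matrix.fromBlocks (1 : Matrix (Fin n) (Fin n) ℝ) 0 (L₁ * Q₁⁻¹) (L₂ * Q₂⁻¹))ᵀ *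
              (Matrix.fromBlocks (A_Gᵀ * Q₁⁻¹ * A_G - Q₁⁻¹) (A_Gᵀ * Q₁⁻¹ * B_G)
                (B_Gᵀ * Q₁⁻¹ * A_G) (B_Gᵀ * Q₁⁻¹ * B_G)) *
              (Matrix.fromBlocks (1 : Matrix (Fin n) (Fin n) ℝ) 0 (L₁ * Q₁⁻¹) (L₂ * Q₂⁻¹)) +
            (Matrix.fromBlocks (L₃ * Q₁⁻¹) (L₄ * Q₂⁻¹) 0 (1 : Matrix (Fin p) (Fin p) ℝ))ᵀ *
              (Matrix.fromBlocks Q₂⁻¹ 0 0 (-Q₂⁻¹)) *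
              (Matrix.fromBlocks (L₃ * Q₁⁻¹) (L₄ * Q₂⁻¹) 0 (1 : Matrix (Fin p) (Fin p) ℝ))).mulVec z < 0) :=
  stmt_14_general n m p A_G B_G Q₁ hQ₁ Q₂ hQ₂ L₁ L₂ L₃ L₄
end
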